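/- Let n ≥ 1 and, for each 1 ≤ i ≤ n, let ψ_i : ℝ_{>0} → ℝ_{>0} be a non-increasing function satisfying ψ_i(x) = o(x^{−2}) as x → ∞. Then dim_H (E(ψ₁) × ⋯ × E(ψₙ)) ≤ min_{1≤i≤n} { n − 1 + 2/λ_i }, where λ_i = liminf_{x→∞} (−log ψ_i(x))/(log x). -/

import Mathlib

open MeasureTheory Filter Asymptotics
open scoped ENNReal Topology

/-- `E(ψ)`: the set of `x ∈ [0,1]` such that for every `0 < ε < 1` there are infinitely many
pairs `(p,q) ∈ ℤ × ℕ` (with `q > 0`) satisfying `(1-ε)ψ(q) < |x - p/q| < ψ(q)`. -/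
noncomputable def EsetApprox (ψ : ℝ → ℝ) : Set ℝ :=
  ⋂ ε ∈ Set.Ioo (0:ℝ) 1,
    {x ∈ Set.Icc (0:ℝ) 1 |
      {pq : ℤ × ℕ | 0 < pq.2 ∧ (1 - ε) * ψ pq.2 < |x - pq.1 / pq.2| ∧
        |x - pq.1 / pq.2| < ψ pq.2}.Infinite}

/-- `λ(ψ) = liminf_{x → ∞} (-log ψ(x)) / log x`. -/
noncomputable def lamExp (ψ : ℝ → ℝ) : ℝ :=
  Filter.liminf (fun x : ℝ => -Real.log (ψ x) / Real.log x) Filter.atTop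

/-!
Only the upper half `|x - p/q| < ψ(q)` of the defining condition of `E(ψ)` matters, and only
in one coordinate `i`: the product lies in the set of `x ∈ [0,1]ⁿ` whose `i`-th coordinate is
`ψᵢ`-well approximable. For each `q`, the points of `[0,1]ⁿ` whose `i`-th coordinate lies within
`ψ(q)` of some `p/q` are covered by `≲ q ψ(q)^{-(n-1)}` cubes of side `2ψ(q)`. If
`ψ(q) ≤ q^{-κ}` with `κ (s - (n-1)) > 2`, the `s`-dimensional sums of the covers by the cubes with
`q ≥ k` are bounded by `∑ q^{1 - κ (s - (n-1))} < ∞` uniformly in `k`, so `μH[s]` of the product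
is finite; and such a `κ` exists for every `s > n - 1 + 2/λᵢ`.
-/

lemma exists_pos_lt_mul_eventually_le_of_div_liminf_lt {α : Type*} {l : Filter α} {f : α → ℝ}
    {a u : ℝ} (ha : 0 < a) (hf : ∀ᶠ x in l, a ≤ f x) (hu : a / liminf f l < u) :
    ∃ c, 0 < c ∧ a < c * u ∧ ∀ᶠ x in l, c ≤ f x := by
  by_cases hcb : IsCoboundedUnder (· ≥ ·) l f
  · have hL : 0 < liminf f l := ha.trans_le (le_liminf_of_le hcb hf)
    have hu0 : 0 < u := (div_pos ha hL).trans hu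
    obtain ⟨c, hac, hcL⟩ := exists_between ((div_lt_iff₀ hu0).2 ((div_lt_iff₀' hL).1 hu))
    exact ⟨c, (div_pos ha hu0).trans hac, (div_lt_iff₀ hu0).1 hac,
      (eventually_lt_of_lt_liminf hcL (isBoundedUnder_of_eventually_ge hf)).mono
        fun _ => le_of_lt⟩
  · -- `liminf f l` is then the junk value `sSup ∅ = 0`, while `f` has arbitrarily large
    -- eventual lower bounds.
    have hL : liminf f l = 0 := by
      rw [liminf_eq]
      exact Real.sSup_of_not_bddAbove hcb
    rw [hL, div_zero] at hu
    simp only [IsCoboundedUnder, IsCobounded, eventually_map, not_exists, not_forall, ge_iff_le,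
      not_le] at hcb
    obtain ⟨c, hc, hac⟩ := hcb (a / u)
    exact ⟨c, (div_pos ha hu).trans hac, (div_lt_iff₀ hu).1 hac, hc⟩

lemma eventually_two_le_neg_log_div_log {ψ : ℝ → ℝ} (hpos : ∀ x, 0 < x → 0 < ψ x)
    (hlittle : ψ =o[atTop] fun x : ℝ => (x ^ 2)⁻¹) :
    ∀ᶠ x in atTop, 2 ≤ -Real.log (ψ x) / Real.log x := by
  filter_upwards [hlittle.bound one_pos, eventually_gt_atTop 1] with x hx hx1
  have hx0 : 0 < x := one_pos.trans hx1
  have hψx : ψ x ≤ (x ^ 2)⁻¹ := by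
    simpa [abs_of_pos (hpos x hx0)] using hx
  rw [le_div_iff₀ (Real.log_pos hx1)]
  have := Real.log_le_log (hpos x hx0) hψx
  rw [Real.log_inv, Real.log_pow] at this
  push_cast at this
  linarith

lemma eventually_le_rpow_neg_of_le_neg_log_div_log {ψ : ℝ → ℝ} {c : ℝ}
    (hpos : ∀ x, 0 < x → 0 < ψ x) (hc : ∀ᶠ x in atTop, c ≤ -Real.log (ψ x) / Real.log x) :
    ∀ᶠ x in atTop, ψ x ≤ x ^ (-c) := by
  filter_upwards [hc, eventually_gt_atTop 1] with x hx hx1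
  have hx0 : 0 < x := one_pos.trans hx1
  rw [le_div_iff₀ (Real.log_pos hx1)] at hx
  rw [← Real.log_le_log_iff (hpos x hx0) (Real.rpow_pos_of_pos hx0 _), Real.log_rpow hx0]
  linarith

lemma exists_eventually_le_rpow_neg_of_div_lamExp_lt {ψ : ℝ → ℝ} {u : ℝ}
    (hpos : ∀ x, 0 < x → 0 < ψ x) (hlittle : ψ =o[atTop] fun x : ℝ => (x ^ 2)⁻¹)
    (hu : 2 / lamExp ψ < u) :
    ∃ κ, 0 < κ ∧ 2 < κ * u ∧ ∀ᶠ x in atTop, ψ x ≤ x ^ (-κ) := by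
  obtain ⟨κ, hκ, hκu, hψκ⟩ := exists_pos_lt_mul_eventually_le_of_div_liminf_lt two_pos
    (eventually_two_le_neg_log_div_log hpos hlittle) hu
  exact ⟨κ, hκ, hκu, eventually_le_rpow_neg_of_le_neg_log_div_log hpos hψκ⟩

def wellApprox (ψ : ℝ → ℝ) : Set ℝ :=
  {x | {pq : ℤ × ℕ | 0 < pq.2 ∧ |x - pq.1 / pq.2| < ψ pq.2}.Infinite}

lemma EsetApprox_subset_Icc_inter_wellApprox (ψ : ℝ → ℝ) :
    EsetApprox ψ ⊆ Set.Icc 0 1 ∩ wellApprox ψ := fun x hx => by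
  obtain ⟨hx01, hinf⟩ := Set.mem_iInter₂.1 hx (1 / 2) ⟨by norm_num, by norm_num⟩
  exact ⟨hx01, hinf.mono fun _ h => ⟨h.1, h.2.2⟩⟩

lemma finite_setOf_abs_sub_div_lt (x c : ℝ) (q : ℕ) :
    {p : ℤ | 0 < q ∧ |x - p / q| < c}.Finite := by
  refine (Set.finite_Ioo ⌊q * (x - c)⌋ ⌈q * (x + c)⌉).subset fun p ⟨hq, hp⟩ => ?_
  have hq' : (0 : ℝ) < q := by exact_mod_cast hq
  rw [← Int.preimage_Ioo]
  obtain ⟨h₁, h₂⟩ := abs_sub_lt_iff.1 hp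
  have hqp : (q : ℝ) * (p / q) = p := mul_div_cancel₀ _ hq'.ne'
  constructor
  · linarith [mul_lt_mul_of_pos_left h₁ hq']
  · linarith [mul_lt_mul_of_pos_left h₂ hq']

lemma exists_le_denom_of_mem_wellApprox {ψ : ℝ → ℝ} {x : ℝ} (hx : x ∈ wellApprox ψ) (k : ℕ) :
    ∃ p : ℤ, ∃ q : ℕ, k ≤ q ∧ 0 < q ∧ |x - p / q| < ψ q := by
  by_contra! h
  refine hx (((Set.finite_Iio k).biUnion fun q _ =>
    (finite_setOf_abs_sub_div_lt x (ψ q) q).image (·, q)).subset ?_)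
  rintro ⟨p, q⟩ ⟨hq, hpq⟩
  have hqk : q < k := by
    by_contra! hkq
    exact not_lt.2 (h p q hkq hq) hpq
  exact Set.mem_biUnion hqk ⟨p, ⟨hq, hpq⟩, rfl⟩

def wellApproxCylinder {ι : Type*} (i₀ : ι) (ψ : ℝ → ℝ) : Set (ι → ℝ) :=
  Set.pi Set.univ (fun _ => Set.Icc 0 1) ∩ Function.eval i₀ ⁻¹' wellApprox ψ

lemma pi_EsetApprox_subset_wellApproxCylinder {ι : Type*} (ψ : ι → ℝ → ℝ) (i₀ : ι) :
    Set.pi Set.univ (fun i => EsetApprox (ψ i)) ⊆ wellApproxCylinder i₀ (ψ i₀) := fun _ hx =>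
  ⟨fun j _ => (EsetApprox_subset_Icc_inter_wellApprox _ (hx j trivial)).1,
    (EsetApprox_subset_Icc_inter_wellApprox _ (hx i₀ trivial)).2⟩

section Cover

variable {ι : Type*} [Fintype ι] [DecidableEq ι] (i₀ : ι) (q : ℕ) (w : ℝ)

/-- In the direction `i₀` the box of side `w` is centred at `v i₀ / q`; in the other directions
it is a cell of the grid `w ℤ`. -/
noncomputable def boxCorner (v : ι → ℤ) : ι → ℝ :=
  fun j => if j = i₀ then v j / q - w / 2 else v j * w

noncomputable def approxBox (v : ι → ℤ) : Set (ι → ℝ) :=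
  Set.pi Set.univ fun j => Set.Icc (boxCorner i₀ q w v j) (boxCorner i₀ q w v j + w)

noncomputable def boxIndices : Finset (ι → ℤ) :=
  Fintype.piFinset fun j => if j = i₀ then Finset.Icc (-q : ℤ) (2 * q) else Finset.Icc 0 ⌊w⁻¹⌋

lemma ediam_approxBox_le (v : ι → ℤ) : Metric.ediam (approxBox i₀ q w v) ≤ ENNReal.ofReal w :=
  Metric.ediam_pi_le_of_le fun j => by rw [Real.ediam_Icc, add_sub_cancel_left]

variable {i₀ q w}

lemma exists_mem_approxBox {x : ι → ℝ} (hx : ∀ j, x j ∈ Set.Icc (0 : ℝ) 1) {p : ℤ} (hq : 0 < q)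
    (hw₀ : 0 < w) (hw₁ : w ≤ 1) (hp : |x i₀ - p / q| < w / 2) :
    ∃ v ∈ boxIndices i₀ q w, x ∈ approxBox i₀ q w v := by
  have hq' : (0 : ℝ) < q := by exact_mod_cast hq
  refine ⟨fun j => if j = i₀ then p else ⌊x j / w⌋, ?_, ?_⟩
  · simp only [boxIndices, Fintype.mem_piFinset]
    intro j
    split_ifs with hj
    · subst hj
      obtain ⟨h₁, h₂⟩ := abs_sub_lt_iff.1 hp
      have hpq : (p : ℝ) = q * (p / q) := (mul_div_cancel₀ _ hq'.ne').symm
      have hx := hx j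
      rw [Finset.mem_Icc, ← Int.cast_le (R := ℝ), ← Int.cast_le (R := ℝ)]
      push_cast
      constructor <;> nlinarith [hx.1, hx.2]
    · have hxw : x j / w ≤ w⁻¹ := by
        rw [div_eq_mul_inv]
        exact mul_le_of_le_one_left (inv_nonneg.2 hw₀.le) (hx j).2
      exact Finset.mem_Icc.2 ⟨Int.floor_nonneg.2 (div_nonneg (hx j).1 hw₀.le),
        Int.floor_le_floor hxw⟩
  · simp only [approxBox, boxCorner, Set.mem_univ_pi]
    intro j
    split_ifs with hj
    · subst hj
      obtain ⟨h₁, h₂⟩ := abs_sub_lt_iff.1 hp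
      constructor <;> linarith
    · have h₁ := (le_div_iff₀ hw₀).1 (Int.floor_le (x j / w))
      have h₂ := (div_le_iff₀ hw₀).1 (Int.lt_floor_add_one (x j / w)).le
      exact ⟨h₁, by linarith⟩

open Finset in
lemma card_boxIndices_le (hq : 1 ≤ q) (hw₀ : 0 < w) (hw₁ : w ≤ 1) :
    (#(boxIndices i₀ q w) : ℝ) ≤ 4 * q * (2 / w) ^ (Fintype.card ι - 1) := by
  have hcard : #(boxIndices i₀ q w) =
      (3 * q + 1) * (⌊w⁻¹⌋ + 1).toNat ^ (Fintype.card ι - 1) := by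
    rw [boxIndices, Fintype.card_piFinset, Fintype.prod_eq_mul_prod_compl i₀, if_pos rfl,
      Finset.prod_congr rfl fun j hj => by rw [if_neg (by simpa using hj)], prod_const,
      card_compl, card_singleton, Int.card_Icc, Int.card_Icc, sub_zero]
    congr 1
    omega
  have hK : ((⌊w⁻¹⌋ + 1).toNat : ℝ) ≤ 2 / w := by
    have h0 : 0 ≤ ⌊w⁻¹⌋ + 1 := by positivity
    have := Int.floor_le w⁻¹
    have : 1 ≤ w⁻¹ := one_le_inv_iff₀.2 ⟨hw₀, hw₁⟩
    rw [← Int.cast_natCast, Int.toNat_of_nonneg h0, div_eq_mul_inv]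
    push_cast
    linarith
  rw [hcard]
  push_cast
  gcongr
  linarith [(Nat.one_le_cast (α := ℝ)).2 hq]

open Finset in
lemma sum_ediam_approxBox_rpow_le {s : ℝ} (hs : (Fintype.card ι : ℝ) - 1 ≤ s) (hq : 1 ≤ q)
    (hw₀ : 0 < w) (hw₁ : w ≤ 1) :
    ∑ v ∈ boxIndices i₀ q w, Metric.ediam (approxBox i₀ q w v) ^ s ≤
      ENNReal.ofReal (4 * 2 ^ (Fintype.card ι - 1) * q * w ^ (s - (Fintype.card ι - 1))) := by
  set d := Fintype.card ι - 1
  have hd : (d : ℝ) = Fintype.card ι - 1 := Nat.cast_pred (Fintype.card_pos_iff.2 ⟨i₀⟩)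
  have hs₀ : 0 ≤ s := by rw [← hd] at hs; exact (Nat.cast_nonneg d).trans hs
  have hws : w ^ s = w ^ d * w ^ (s - d) := by
    rw [← Real.rpow_natCast, ← Real.rpow_add hw₀, add_sub_cancel]
  calc ∑ v ∈ boxIndices i₀ q w, Metric.ediam (approxBox i₀ q w v) ^ s
      ≤ #(boxIndices i₀ q w) • ENNReal.ofReal w ^ s :=
        sum_le_card_nsmul _ _ _ fun v _ =>
          ENNReal.rpow_le_rpow (ediam_approxBox_le i₀ q w v) hs₀
    _ = ENNReal.ofReal (#(boxIndices i₀ q w) * w ^ s) := by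
        rw [nsmul_eq_mul, ENNReal.ofReal_mul (Nat.cast_nonneg _), ENNReal.ofReal_natCast,
          ENNReal.ofReal_rpow_of_pos hw₀]
    _ ≤ ENNReal.ofReal (4 * q * (2 / w) ^ d * w ^ s) := by
        gcongr
        exact card_boxIndices_le hq hw₀ hw₁
    _ = _ := by
        rw [hws, hd, div_pow]
        field_simp

lemma sum_ediam_approxBox_rpow_le_of_le_rpow_neg {ψ : ℝ → ℝ} {κ s : ℝ}
    (ht : 0 < s - (Fintype.card ι - 1)) (hq : 1 ≤ q) (hψ₀ : 0 < ψ q)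
    (hψκ : ψ q ≤ (q : ℝ) ^ (-κ)) (hψ₁ : 2 * ψ q ≤ 1) :
    ∑ v ∈ boxIndices i₀ q (2 * ψ q), Metric.ediam (approxBox i₀ q (2 * ψ q) v) ^ s ≤
      ENNReal.ofReal (4 * 2 ^ (Fintype.card ι - 1) * 2 ^ (s - (Fintype.card ι - 1)) *
        (q : ℝ) ^ (1 - κ * (s - (Fintype.card ι - 1)))) := by
  set t := s - (Fintype.card ι - 1)
  have hq₀ : (0 : ℝ) < q := Nat.cast_pos.2 hq
  have hψt : ψ q ^ t ≤ (q : ℝ) ^ (-κ * t) := by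
    rw [Real.rpow_mul hq₀.le]
    exact Real.rpow_le_rpow hψ₀.le hψκ ht.le
  refine (sum_ediam_approxBox_rpow_le (by linarith) hq (by positivity) hψ₁).trans
    (ENNReal.ofReal_le_ofReal ?_)
  calc 4 * 2 ^ (Fintype.card ι - 1) * q * (2 * ψ q) ^ t
      = 4 * 2 ^ (Fintype.card ι - 1) * 2 ^ t * (q * ψ q ^ t) := by
        rw [Real.mul_rpow zero_le_two hψ₀.le]; ring
    _ ≤ 4 * 2 ^ (Fintype.card ι - 1) * 2 ^ t * (q * (q : ℝ) ^ (-κ * t)) := by gcongr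
    _ = 4 * 2 ^ (Fintype.card ι - 1) * 2 ^ t * (q : ℝ) ^ (1 - κ * t) := by
        rw [sub_eq_add_neg, Real.rpow_add hq₀, Real.rpow_one, neg_mul]

variable (i₀) (ψ : ℝ → ℝ)

noncomputable def approxCover (k : ℕ) :
    (Σ q : ℕ, boxIndices i₀ q (2 * ψ q)) → Set (ι → ℝ) :=
  fun i => if k ≤ i.1 then approxBox i₀ i.1 (2 * ψ i.1) i.2 else ∅

variable {i₀ ψ}

lemma wellApproxCylinder_subset_iUnion_approxCover {k : ℕ}
    (hψ : ∀ q, k ≤ q → 2 * ψ q ≤ 1) :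
    wellApproxCylinder i₀ ψ ⊆ ⋃ i, approxCover i₀ ψ k i := by
  rintro x ⟨hx, hxW⟩
  obtain ⟨p, q, hkq, hq, hpq⟩ := exists_le_denom_of_mem_wellApprox hxW k
  have hw₀ : 0 < 2 * ψ q := by linarith [(abs_nonneg _).trans_lt hpq]
  obtain ⟨v, hv, hxv⟩ := exists_mem_approxBox (w := 2 * ψ q) (fun j => hx j trivial) hq hw₀
    (hψ q hkq) (by rwa [mul_div_cancel_left₀ _ two_ne_zero])
  exact Set.mem_iUnion.2 ⟨⟨q, v, hv⟩, by rwa [approxCover, if_pos hkq]⟩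

lemma ediam_approxCover_le {k : ℕ} {κ : ℝ} (hk : 0 < k) (hκ : 0 ≤ κ)
    (hψ : ∀ q, k ≤ q → ψ q ≤ (q : ℝ) ^ (-κ)) (i) :
    Metric.ediam (approxCover i₀ ψ k i) ≤ ENNReal.ofReal (2 * (k : ℝ) ^ (-κ)) := by
  obtain ⟨q, v⟩ := i
  by_cases hkq : k ≤ q
  · rw [approxCover, if_pos hkq]
    refine (ediam_approxBox_le i₀ q _ v).trans (ENNReal.ofReal_le_ofReal ?_)
    have := Real.rpow_le_rpow_of_nonpos (Nat.cast_pos.2 hk) (Nat.cast_le.2 hkq)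
      (neg_nonpos.2 hκ)
    linarith [hψ q hkq]
  · simp [approxCover, if_neg hkq]

lemma tsum_ediam_approxCover_rpow_le {k : ℕ} {s : ℝ} (hs : 0 < s) (f : ℕ → ℝ≥0∞)
    (hf : ∀ q, k ≤ q →
      ∑ v ∈ boxIndices i₀ q (2 * ψ q), Metric.ediam (approxBox i₀ q (2 * ψ q) v) ^ s ≤ f q) :
    ∑' i, Metric.ediam (approxCover i₀ ψ k i) ^ s ≤ ∑' q, f q := by
  rw [ENNReal.tsum_sigma']
  refine ENNReal.tsum_le_tsum fun q => ?_
  by_cases hkq : k ≤ q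
  · simp only [approxCover, if_pos hkq]
    rw [Finset.tsum_subtype (boxIndices i₀ q (2 * ψ q))
      fun v => Metric.ediam (approxBox i₀ q (2 * ψ q) v) ^ s]
    exact hf q hkq
  · simp [approxCover, if_neg hkq, ENNReal.zero_rpow_of_pos hs]

lemma hausdorffMeasure_wellApproxCylinder_ne_top {κ s : ℝ} (hκ : 0 < κ)
    (hκs : 2 < κ * (s - (Fintype.card ι - 1)))
    (hψ : ∀ᶠ x : ℝ in atTop, 0 < ψ x ∧ ψ x ≤ x ^ (-κ)) :
    μH[s] (wellApproxCylinder i₀ ψ) ≠ ∞ := by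
  set t := s - (Fintype.card ι - 1)
  have ht : 0 < t := pos_of_mul_pos_right (two_pos.trans hκs) hκ.le
  have hs : 0 < s := by
    have : (1 : ℝ) ≤ Fintype.card ι := Nat.one_le_cast.2 (Fintype.card_pos_iff.2 ⟨i₀⟩)
    linarith
  have hsmall : ∀ᶠ x : ℝ in atTop, x ^ (-κ) ≤ 1 / 2 :=
    (tendsto_order.1 (tendsto_rpow_neg_atTop hκ)).2 _ one_half_pos |>.mono fun _ => le_of_lt
  obtain ⟨Q₀, hQ₀⟩ := eventually_atTop.1 <| (tendsto_natCast_atTop_atTop.eventually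
    (hψ.and hsmall)).and (eventually_ge_atTop 1)
  set C : ℝ := 4 * 2 ^ (Fintype.card ι - 1) * 2 ^ t
  have hsum : Summable fun q : ℕ => C * (q : ℝ) ^ (1 - κ * t) :=
    (Real.summable_nat_rpow.2 (by linarith)).mul_left C
  have hr : Tendsto (fun k : ℕ => ENNReal.ofReal (2 * (k : ℝ) ^ (-κ))) atTop (𝓝 0) := by
    simpa using ENNReal.tendsto_ofReal
      (((tendsto_rpow_neg_atTop hκ).comp tendsto_natCast_atTop_atTop).const_mul 2)
  have hdiam : ∀ᶠ k : ℕ in atTop, ∀ i,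
      Metric.ediam (approxCover i₀ ψ k i) ≤ ENNReal.ofReal (2 * (k : ℝ) ^ (-κ)) := by
    filter_upwards [eventually_ge_atTop Q₀] with k hk
    exact ediam_approxCover_le (hQ₀ k hk).2 hκ.le fun q hkq => (hQ₀ q (hk.trans hkq)).1.1.2
  have hcover : ∀ᶠ k : ℕ in atTop, wellApproxCylinder i₀ ψ ⊆ ⋃ i, approxCover i₀ ψ k i := by
    filter_upwards [eventually_ge_atTop Q₀] with k hk
    refine wellApproxCylinder_subset_iUnion_approxCover fun q hkq => ?_
    obtain ⟨⟨⟨-, hψκ⟩, hκ₂⟩, -⟩ := hQ₀ q (hk.trans hkq)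
    linarith
  refine ne_top_of_le_ne_top (ENNReal.ofReal_ne_top (r := ∑' q : ℕ, C * (q : ℝ) ^ (1 - κ * t))) ?_
  calc _ ≤ liminf (fun k => ∑' i, Metric.ediam (approxCover i₀ ψ k i) ^ s) atTop :=
        Measure.hausdorffMeasure_le_liminf_tsum s _ _ hr _ hdiam hcover
    _ ≤ ∑' q : ℕ, ENNReal.ofReal (C * (q : ℝ) ^ (1 - κ * t)) :=
        liminf_le_of_frequently_le' <| Eventually.frequently <|
          (eventually_ge_atTop Q₀).mono fun k hk =>
            tsum_ediam_approxCover_rpow_le hs _ fun q hkq => by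
              obtain ⟨⟨⟨hψ₀, hψκ⟩, hκ₂⟩, hq₁⟩ := hQ₀ q (hk.trans hkq)
              exact sum_ediam_approxBox_rpow_le_of_le_rpow_neg ht hq₁ hψ₀ hψκ (by linarith)
    _ = _ := (ENNReal.ofReal_tsum_of_nonneg (fun q => by positivity) hsum).symm

lemma dimH_wellApproxCylinder_le (hpos : ∀ x, 0 < x → 0 < ψ x)
    (hlittle : ψ =o[atTop] fun x : ℝ => (x ^ 2)⁻¹) :
    dimH (wellApproxCylinder i₀ ψ) ≤
      ENNReal.ofReal ((Fintype.card ι : ℝ) - 1 + 2 / lamExp ψ) := by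
  refine dimH_le fun d hd => le_of_not_gt fun hlt => ?_
  rw [← ENNReal.ofReal_coe_nnreal, ENNReal.ofReal_lt_ofReal_iff'] at hlt
  obtain ⟨κ, hκ, hκd, hψκ⟩ := exists_eventually_le_rpow_neg_of_div_lamExp_lt hpos hlittle
    (u := d - (Fintype.card ι - 1)) (by linarith [hlt.1])
  exact hausdorffMeasure_wellApproxCylinder_ne_top hκ hκd
    ((hψκ.and (eventually_gt_atTop 0)).mono fun x hx => ⟨hpos x hx.2, hx.1⟩) hd

end Cover

theorem stmt_3 (n : ℕ) (ψ : Fin n → ℝ → ℝ)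
    (hpos : ∀ i, ∀ x : ℝ, 0 < x → 0 < ψ i x)
    (hlittle : ∀ i, (ψ i) =o[atTop] fun x : ℝ => (x ^ 2)⁻¹) :
    dimH (Set.pi Set.univ fun i => EsetApprox (ψ i)) ≤
      ⨅ i : Fin n, ENNReal.ofReal ((n : ℝ) - 1 + 2 / lamExp (ψ i)) :=
  le_iInf fun i => (dimH_mono (pi_EsetApprox_subset_wellApproxCylinder ψ i)).trans <| by
    simpa using dimH_wellApproxCylinder_le (i₀ := i) (hpos i) (hlittle i)
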